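/- arXiv:math/0411299 — 6 statements merged into one kernel-verified Lean document; each statement's English description precedes it below -/
import Mathlib

section
/- Let κ, κ̃ > 0 and ρ, ρ̃ real numbers satisfying the system κρ̃ = κ̃ρ, (κ̃−4)ρ − ρρ̃ + 12 − 2κ = 0, and (κ−4)ρ̃ − ρρ̃ + 12 − 2κ̃ = 0. Then either κ̃ = κ and ρ = ρ̃ ∈ {2, κ−6}, or κ̃ = 16/κ and ρ = −κ/2, ρ̃ = −κ̃/2. -/
/-!
Eliminating `ρρ̃` between the two quadratic equations and using `κρ̃ = κ̃ρ` gives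
`(κ̃ - κ)(κ + 2ρ) = 0`. If `κ̃ = κ`, then `ρ = ρ̃` and the quadratic equation factors as
`(ρ - 2)(ρ - (κ - 6)) = 0`. If `ρ = -κ/2`, then `ρ̃ = -κ̃/2` and the quadratic equation
reduces to `κκ̃ = 16`.
-/

namespace CommutationN0

variable {K : Type*} [Field K] {κ κt ρ ρt : K}

theorem kappa_eq_or_rho_eq_neg_half [CharZero K] (h1 : κ * ρt = κt * ρ)
    (h2 : (κt - 4) * ρ - ρ * ρt + 12 - 2 * κ = 0)
    (h3 : (κ - 4) * ρt - ρ * ρt + 12 - 2 * κt = 0) :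
    κt = κ ∨ ρ = -κ / 2 := by
  have key : (κt - κ) * (κ + 2 * ρ) = 0 := by
    linear_combination (κ / 2) * h2 - (κ / 2) * h3 + (κ / 2 - 2) * h1
  rcases mul_eq_zero.mp key with h | h
  · exact .inl (sub_eq_zero.mp h)
  · exact .inr (by linear_combination h / 2)

theorem rho_eq_and_roots_of_kappa_eq (hκ : κ ≠ 0) (h1 : κ * ρt = κt * ρ)
    (h2 : (κt - 4) * ρ - ρ * ρt + 12 - 2 * κ = 0) (hk : κt = κ) :
    ρ = ρt ∧ (ρ = 2 ∨ ρ = κ - 6) := by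
  subst hk
  have hρ : ρ = ρt := (mul_left_cancel₀ hκ h1).symm
  subst hρ
  have roots : (ρ - 2) * (ρ - (κt - 6)) = 0 := by linear_combination -h2
  refine ⟨rfl, ?_⟩
  rcases mul_eq_zero.mp roots with h | h
  · exact .inl (sub_eq_zero.mp h)
  · exact .inr (sub_eq_zero.mp h)

theorem kappa_eq_sixteen_div_of_rho_eq_neg_half [CharZero K] (hκ : κ ≠ 0)
    (h1 : κ * ρt = κt * ρ) (h2 : (κt - 4) * ρ - ρ * ρt + 12 - 2 * κ = 0) (hρ : ρ = -κ / 2) :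
    κt = 16 / κ ∧ ρt = -κt / 2 := by
  have hρt : ρt = -κt / 2 :=
    mul_left_cancel₀ hκ (by linear_combination h1 + κt * hρ)
  subst hρ hρt
  refine ⟨(eq_div_iff hκ).mpr ?_, rfl⟩
  linear_combination (-4 / 3 : K) * h2

end CommutationN0

open CommutationN0 in
theorem commutation_n0_classification_general (κ κt ρ ρt : ℝ)
    (hκ : 0 < κ)
    (h1 : κ * ρt = κt * ρ)
    (h2 : (κt - 4) * ρ - ρ * ρt + 12 - 2 * κ = 0)
    (h3 : (κ - 4) * ρt - ρ * ρt + 12 - 2 * κt = 0) :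
    (κt = κ ∧ ρ = ρt ∧ (ρ = 2 ∨ ρ = κ - 6)) ∨
    (κt = 16 / κ ∧ ρ = -κ / 2 ∧ ρt = -κt / 2) := by
  rcases kappa_eq_or_rho_eq_neg_half h1 h2 h3 with hk | hρ
  · exact .inl ⟨hk, rho_eq_and_roots_of_kappa_eq hκ.ne' h1 h2 hk⟩
  · obtain ⟨hκt, hρt⟩ := kappa_eq_sixteen_div_of_rho_eq_neg_half hκ.ne' h1 h2 hρ
    exact .inr ⟨hκt, hρ, hρt⟩

/-- Classification of commuting SLE(κ,ρ) drift parameters, case n = 0. -/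
theorem commutation_n0_classification (κ κt ρ ρt : ℝ)
    (hκ : 0 < κ) (hκt : 0 < κt)
    (h1 : κ * ρt = κt * ρ)
    (h2 : (κt - 4) * ρ - ρ * ρt + 12 - 2 * κ = 0)
    (h3 : (κ - 4) * ρt - ρ * ρt + 12 - 2 * κt = 0) :
    (κt = κ ∧ ρ = ρt ∧ (ρ = 2 ∨ ρ = κ - 6)) ∨
    (κt = 16 / κ ∧ ρ = -κ / 2 ∧ ρt = -κt / 2) :=
  commutation_n0_classification_general κ κt ρ ρt hκ h1 h2 h3
end

section
/- Let κ > 0, and consider the polynomials in ρ given by P(ρ) = (κ̃−4)ρ − ρ²κ̃/κ + 12 − 2κ and Q(ρ) = (κ−4)ρκ̃/κ − ρ²κ̃/κ + 12 − 2κ̃, where κ̃ > 0. The resultant of P and Q (as polynomials in ρ) equals 12κ̃(κ̃−κ)²(κκ̃−16)/κ³. -/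
/-- The resultant of two quadratic polynomials `a ρ² + b ρ + c` and `a' ρ² + b' ρ + c'`
is `(a c' − a' c)² − (a b' − a' b)(b c' − b' c)`. -/
noncomputable def resultantQuad (a b c a' b' c' : ℝ) : ℝ :=
  (a * c' - a' * c) ^ 2 - (a * b' - a' * b) * (b * c' - b' * c)

theorem resultant_commutation_polys_general (κ κt : ℝ) (hκ : 0 < κ) :
    resultantQuad (-(κt / κ)) (κt - 4) (12 - 2 * κ)
        (-(κt / κ)) ((κ - 4) * κt / κ) (12 - 2 * κt) =
      12 * κt * (κt - κ) ^ 2 * (κ * κt - 16) / κ ^ 3 := by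
  unfold resultantQuad
  field_simp
  ring

/-- The resultant of the two commutation-condition polynomials
`P(ρ) = (κ̃−4)ρ − ρ²κ̃/κ + 12 − 2κ` and `Q(ρ) = (κ−4)ρκ̃/κ − ρ²κ̃/κ + 12 − 2κ̃`
equals `12κ̃(κ̃−κ)²(κκ̃−16)/κ³`. -/
theorem resultant_commutation_polys (κ κt : ℝ) (hκ : 0 < κ) (hκt : 0 < κt) :
    resultantQuad (-(κt / κ)) (κt - 4) (12 - 2 * κ)
        (-(κt / κ)) ((κ - 4) * κt / κ) (12 - 2 * κt) =
      12 * κt * (κt - κ) ^ 2 * (κ * κt - 16) / κ ^ 3 :=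
  resultant_commutation_polys_general κ κt hκ
end

section
/- Let κ, κ̃ > 0 and real numbers ρ, ρ̃, ρ_i, ρ̃_i (i = 1,…,n, not all ρ_i, ρ̃_i zero) satisfying: κρ̃ = κ̃ρ, (κ̃−4)ρ − ρρ̃ + 12 − 2κ = 0, (κ−4)ρ̃ − ρρ̃ + 12 − 2κ̃ = 0, ρρ̃_i = 2ρ_i, and ρ̃ρ_i = 2ρ̃_i for all i. Then ρρ̃ = 4, and either (κ = κ̃, ρ = ρ̃ = 2, ρ_i = ρ̃_i for all i) or (κκ̃ = 16, ρ = −κ/2, ρ̃ = −κ̃/2, ρ̃_i = −(4/κ)ρ_i for all i). -/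
/-!
Coupling the two families of force points at an index where they do not both vanish gives
`ρ ρ̃ = 4`. Using this and `κ ρ̃ = κ̃ ρ` to eliminate `κ̃ ρ²` and `ρ² ρ̃` from `ρ` times the second
relation leaves the factorization `(ρ - 2)(2ρ + κ) = 0`; each factor determines one family.
-/

namespace CommutingSLE

variable {K : Type*} [Field K]

theorem mul_eq_four_of_coupling {ρ ρt a b : K} (ha : ρ * b = 2 * a) (hb : ρt * a = 2 * b)
    (hab : a ≠ 0 ∨ b ≠ 0) : ρ * ρt = 4 := by
  rcases hab with h | h
  · exact mul_right_cancel₀ h (by linear_combination ρ * hb + 2 * ha)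
  · exact mul_right_cancel₀ h (by linear_combination ρt * ha + 2 * hb)

variable [CharZero K] {κ κt ρ ρt : K}

theorem rho_eq_two_or_eq_neg_kappa_div_two (h1 : κ * ρt = κt * ρ)
    (h2 : (κt - 4) * ρ - ρ * ρt + 12 - 2 * κ = 0) (hρ : ρ * ρt = 4) :
    ρ = 2 ∨ ρ = -κ / 2 := by
  have hfactor : (ρ - 2) * (2 * ρ + κ) = 0 := by
    linear_combination (-1 / 2 : K) * (ρ * h2 + ρ * h1 - κ * hρ + ρ * hρ)
  rcases mul_eq_zero.mp hfactor with h | h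
  · exact Or.inl (by linear_combination h)
  · exact Or.inr (by linear_combination h / 2)

theorem of_rho_eq_two (h1 : κ * ρt = κt * ρ) (hρ : ρ * ρt = 4) (h : ρ = 2) :
    κ = κt ∧ ρt = 2 := by
  subst h
  have hρt : ρt = 2 := by linear_combination hρ / 2
  exact ⟨by linear_combination (h1 - κ * hρt) / 2, hρt⟩

theorem of_rho_eq_neg_kappa_div_two (h1 : κ * ρt = κt * ρ) (hρ : ρ * ρt = 4)
    (h : ρ = -κ / 2) : κ * κt = 16 ∧ ρt = -κt / 2 := by
  subst h
  have hκ : κ ≠ 0 := by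
    rintro rfl
    norm_num at hρ
  have hκρt : κ * ρt = -8 := by linear_combination -2 * hρ
  refine ⟨by linear_combination 2 * h1 - 2 * hκρt, mul_left_cancel₀ hκ ?_⟩
  linear_combination h1

end CommutingSLE

open CommutingSLE

theorem commutation_parametric_classification_general (n : ℕ) (κ κt ρ ρt : ℝ)
    (ρi ρti : Fin n → ℝ)
    (hnz : ∃ i, ρi i ≠ 0 ∨ ρti i ≠ 0)
    (h1 : κ * ρt = κt * ρ)
    (h2 : (κt - 4) * ρ - ρ * ρt + 12 - 2 * κ = 0)
    (h4 : ∀ i, ρ * ρti i = 2 * ρi i)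
    (h5 : ∀ i, ρt * ρi i = 2 * ρti i) :
    ρ * ρt = 4 ∧
    ((κ = κt ∧ ρ = 2 ∧ ρt = 2 ∧ ∀ i, ρi i = ρti i) ∨
     (κ * κt = 16 ∧ ρ = -κ / 2 ∧ ρt = -κt / 2 ∧ ∀ i, ρti i = -(4 / κ) * ρi i)) := by
  obtain ⟨i, hi⟩ := hnz
  have hρρt := mul_eq_four_of_coupling (h4 i) (h5 i) hi
  refine ⟨hρρt, ?_⟩
  rcases rho_eq_two_or_eq_neg_kappa_div_two h1 h2 hρρt with hρ | hρ
  · obtain ⟨hκ, hρt⟩ := of_rho_eq_two h1 hρρt hρ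
    exact Or.inl ⟨hκ, hρ, hρt, fun j => by linear_combination (h5 j - ρi j * hρt) / 2⟩
  · obtain ⟨hκκt, hρt⟩ := of_rho_eq_neg_kappa_div_two h1 hρρt hρ
    have hκ : κ ≠ 0 := left_ne_zero_of_mul (b := κt) (by rw [hκκt]; norm_num)
    refine Or.inr ⟨hκκt, hρ, hρt, fun j => ?_⟩
    field_simp
    linear_combination (-κ / 2) * h5 j + (κ * ρi j / 2) * hρt - (ρi j / 4) * hκκt

/-- Classification of commuting SLE_κ(ρ,ρ₁,…,ρ_n) pairs in the parametric case. -/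
theorem commutation_parametric_classification (n : ℕ) (κ κt ρ ρt : ℝ)
    (ρi ρti : Fin n → ℝ)
    (hκ : 0 < κ) (hκt : 0 < κt)
    (hnz : ∃ i, ρi i ≠ 0 ∨ ρti i ≠ 0)
    (h1 : κ * ρt = κt * ρ)
    (h2 : (κt - 4) * ρ - ρ * ρt + 12 - 2 * κ = 0)
    (h3 : (κ - 4) * ρt - ρ * ρt + 12 - 2 * κt = 0)
    (h4 : ∀ i, ρ * ρti i = 2 * ρi i)
    (h5 : ∀ i, ρt * ρi i = 2 * ρti i) :
    ρ * ρt = 4 ∧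
    ((κ = κt ∧ ρ = 2 ∧ ρt = 2 ∧ ∀ i, ρi i = ρti i) ∨
     (κ * κt = 16 ∧ ρ = -κ / 2 ∧ ρt = -κt / 2 ∧ ∀ i, ρti i = -(4 / κ) * ρi i)) :=
  commutation_parametric_classification_general n κ κt ρ ρt ρi ρti hnz h1 h2 h4 h5
end

section
/- Let κ > 0 and define the differential operators in variables x, y, z_1, …, z_n: 𝓛 = (κ/2)∂_xx + b(x,y,z)∂_x + (2/(y−x))∂_y + Σ_i (2/(z_i−x))∂_i and 𝓜 = (κ̃/2)∂_yy + b̃(x,y,z)∂_y + (2/(x−y))∂_x + Σ_i (2/(z_i−y))∂_i, with b(x,y) = ρ/(x−y), b̃(x,y) = ρ̃/(y−x), n = 0, κ = κ̃, ρ = ρ̃ = κ−6. Then [𝓛,𝓜] = (4/(y−x)²)(𝓜 − 𝓛) as operators acting on smooth functions of (x,y). -/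
open scoped BigOperators

/-- Partial derivative in the first variable of a function of two real variables. -/
noncomputable def px (F : ℝ × ℝ → ℝ) : ℝ × ℝ → ℝ :=
  fun p => deriv (fun u => F (u, p.2)) p.1

/-- Partial derivative in the second variable of a function of two real variables. -/
noncomputable def py (F : ℝ × ℝ → ℝ) : ℝ × ℝ → ℝ :=
  fun p => deriv (fun u => F (p.1, u)) p.2

/-- The generator `𝓛 = (κ/2)∂ₓₓ + ((κ−6)/(x−y))∂ₓ + (2/(y−x))∂_y` of SLE_κ(κ−6) growing at x. -/
noncomputable def opL (κ : ℝ) (F : ℝ × ℝ → ℝ) : ℝ × ℝ → ℝ :=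
  fun p => κ / 2 * px (px F) p + (κ - 6) / (p.1 - p.2) * px F p + 2 / (p.2 - p.1) * py F p

/-- The generator `𝓜 = (κ/2)∂_yy + ((κ−6)/(y−x))∂_y + (2/(x−y))∂ₓ` of SLE_κ(κ−6) growing at y. -/
noncomputable def opM (κ : ℝ) (F : ℝ × ℝ → ℝ) : ℝ × ℝ → ℝ :=
  fun p => κ / 2 * py (py F) p + (κ - 6) / (p.2 - p.1) * py F p + 2 / (p.1 - p.2) * px F p

open scoped ContDiff

noncomputable def pd (v : ℝ × ℝ) (G : ℝ × ℝ → ℝ) : ℝ × ℝ → ℝ := fun p => fderiv ℝ G p v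

lemma pd_contDiff {G : ℝ × ℝ → ℝ} (hG : ContDiff ℝ ∞ G) (v : ℝ × ℝ) :
    ContDiff ℝ ∞ (pd v G) := by
  have h1 : ContDiff ℝ ∞ (fderiv ℝ G) := hG.fderiv_right (by simp)
  exact (ContinuousLinearMap.apply ℝ ℝ v).contDiff.comp h1

lemma hasDerivAt_slice1 {G : ℝ × ℝ → ℝ} (hG : ContDiff ℝ ∞ G) (x y : ℝ) :
    HasDerivAt (fun u => G (u, y)) (pd (1, 0) G (x, y)) x := by
  have h := ((hG.differentiable (by simp)) (x, y)).hasFDerivAt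
  have hl : HasDerivAt (fun u : ℝ => (u, y)) ((1 : ℝ), (0 : ℝ)) x :=
    (hasDerivAt_id x).prodMk (hasDerivAt_const x y)
  simpa [pd, Function.comp_def] using h.comp_hasDerivAt x hl

lemma hasDerivAt_slice2 {G : ℝ × ℝ → ℝ} (hG : ContDiff ℝ ∞ G) (x y : ℝ) :
    HasDerivAt (fun v => G (x, v)) (pd (0, 1) G (x, y)) y := by
  have h := ((hG.differentiable (by simp)) (x, y)).hasFDerivAt
  have hl : HasDerivAt (fun v : ℝ => (x, v)) ((0 : ℝ), (1 : ℝ)) y :=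
    (hasDerivAt_const y x).prodMk (hasDerivAt_id y)
  simpa [pd, Function.comp_def] using h.comp_hasDerivAt y hl

lemma px_eq {G : ℝ × ℝ → ℝ} (hG : ContDiff ℝ ∞ G) : px G = pd (1, 0) G :=
  funext fun p => (hasDerivAt_slice1 hG p.1 p.2).deriv

lemma py_eq {G : ℝ × ℝ → ℝ} (hG : ContDiff ℝ ∞ G) : py G = pd (0, 1) G :=
  funext fun p => (hasDerivAt_slice2 hG p.1 p.2).deriv

lemma pd_comm {G : ℝ × ℝ → ℝ} (hG : ContDiff ℝ ∞ G) (v w : ℝ × ℝ) (p : ℝ × ℝ) :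
    pd v (pd w G) p = pd w (pd v G) p := by
  have hd : ∀ q, HasFDerivAt G (fderiv ℝ G q) q := fun q =>
    ((hG.differentiable (by simp)) q).hasFDerivAt
  have h2 : ContDiff ℝ ∞ (fderiv ℝ G) := hG.fderiv_right (by simp)
  have hx : HasFDerivAt (fderiv ℝ G) (fderiv ℝ (fderiv ℝ G) p) p :=
    ((h2.differentiable (by simp)) p).hasFDerivAt
  have key : ∀ a b : ℝ × ℝ, pd a (pd b G) p = fderiv ℝ (fderiv ℝ G) p a b := by
    intro a b
    have h3 : HasFDerivAt (pd b G)
        ((ContinuousLinearMap.apply ℝ ℝ b).comp (fderiv ℝ (fderiv ℝ G) p)) p :=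
      (ContinuousLinearMap.apply ℝ ℝ b).hasFDerivAt.comp p hx
    simp [pd, h3.fderiv]
  rw [key v w, key w v, second_derivative_symmetric hd hx v w]

lemma pd_comm' {G : ℝ × ℝ → ℝ} (hG : ContDiff ℝ ∞ G) :
    pd (0, 1) (pd (1, 0) G) = pd (1, 0) (pd (0, 1) G) :=
  funext (pd_comm hG _ _)

lemma hda_A (c : ℝ) {x y : ℝ} (h : x ≠ y) :
    HasDerivAt (fun u => c / (u - y)) (-c / (x - y) ^ 2) x := by
  have h0 : x - y ≠ 0 := sub_ne_zero.2 h
  have h2 := (((hasDerivAt_id x).sub_const y).inv h0).const_mul c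
  have e1 : (fun u : ℝ => c / (u - y)) = fun u => c * (u - y)⁻¹ := by
    funext u; rw [div_eq_mul_inv]
  have e2 : -c / (x - y) ^ 2 = c * (-1 / (id x - y) ^ 2) := by
    simp only [id]; ring
  rw [e1, e2]; exact h2

lemma hda_B (c : ℝ) {x y : ℝ} (h : x ≠ y) :
    HasDerivAt (fun u => c / (y - u)) (c / (y - x) ^ 2) x := by
  have h0 : y - x ≠ 0 := sub_ne_zero.2 (Ne.symm h)
  have h1 : HasDerivAt (fun u : ℝ => y - u) (-1) x := by
    simpa using (hasDerivAt_const x y).fun_sub (hasDerivAt_id x)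
  have h2 := (h1.inv h0).const_mul c
  have e1 : (fun u : ℝ => c / (y - u)) = fun u => c * (y - u)⁻¹ := by
    funext u; rw [div_eq_mul_inv]
  have e2 : c / (y - x) ^ 2 = c * (-(-1) / (y - x) ^ 2) := by ring
  rw [e1, e2]; exact h2

lemma hda_A2 (c : ℝ) {x y : ℝ} (h : x ≠ y) :
    HasDerivAt (fun u => c / (u - y) ^ 2) (-(2 * c) / (x - y) ^ 3) x := by
  have h0 : x - y ≠ 0 := sub_ne_zero.2 h
  have h1 : HasDerivAt (fun u : ℝ => (u - y) ^ 2) (2 * (x - y)) x := by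
    simpa using ((hasDerivAt_id x).sub_const y).fun_pow 2
  have h2 := (h1.inv (pow_ne_zero 2 h0)).const_mul c
  have e1 : (fun u : ℝ => c / (u - y) ^ 2) = fun u => c * ((u - y) ^ 2)⁻¹ := by
    funext u; rw [div_eq_mul_inv]
  have e2 : -(2 * c) / (x - y) ^ 3 = c * (-(2 * (x - y)) / ((x - y) ^ 2) ^ 2) := by
    field_simp
  rw [e1, e2]; exact h2

lemma hda_B2 (c : ℝ) {x y : ℝ} (h : x ≠ y) :
    HasDerivAt (fun u => c / (y - u) ^ 2) (2 * c / (y - x) ^ 3) x := by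
  have h0 : y - x ≠ 0 := sub_ne_zero.2 (Ne.symm h)
  have h1 : HasDerivAt (fun u : ℝ => (y - u) ^ 2) (-(2 * (y - x))) x := by
    have := ((hasDerivAt_const x y).fun_sub (hasDerivAt_id x)).fun_pow 2
    simpa using this
  have h2 := (h1.inv (pow_ne_zero 2 h0)).const_mul c
  have e1 : (fun u : ℝ => c / (y - u) ^ 2) = fun u => c * ((y - u) ^ 2)⁻¹ := by
    funext u; rw [div_eq_mul_inv]
  have e2 : 2 * c / (y - x) ^ 3 = c * (- -(2 * (y - x)) / ((y - x) ^ 2) ^ 2) := by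
    field_simp
  rw [e1, e2]; exact h2


/-- Infinitesimal commutation relation `[𝓛,𝓜] = (4/(y−x)²)(𝓜−𝓛)` for two chordal
SLE_κ(κ−6) processes (n = 0 spectator points, κ̃ = κ, ρ = ρ̃ = κ−6). -/
theorem commutation_relation_kappa_minus_6 (κ : ℝ) (hκ : 0 < κ)
    (F : ℝ × ℝ → ℝ) (hF : ContDiff ℝ (⊤ : ℕ∞) F)
    (p : ℝ × ℝ) (hp : p.1 ≠ p.2) :
    opL κ (opM κ F) p - opM κ (opL κ F) p =
      4 / (p.2 - p.1) ^ 2 * (opM κ F p - opL κ F p) := by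
  obtain ⟨x, y⟩ := p
  have hxy : x ≠ y := hp
  have hyx : y ≠ x := Ne.symm hxy
  have hF0 : ContDiff ℝ ∞ F := hF.of_le (by simp)
  -- smoothness of partial derivatives
  have c1 : ContDiff ℝ ∞ (pd (1, 0) F) := pd_contDiff hF0 _
  have c2 : ContDiff ℝ ∞ (pd (0, 1) F) := pd_contDiff hF0 _
  have c11 : ContDiff ℝ ∞ (pd (1, 0) (pd (1, 0) F)) := pd_contDiff c1 _
  have c12 : ContDiff ℝ ∞ (pd (1, 0) (pd (0, 1) F)) := pd_contDiff c2 _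
  have c21 : ContDiff ℝ ∞ (pd (0, 1) (pd (1, 0) F)) := pd_contDiff c1 _
  have c22 : ContDiff ℝ ∞ (pd (0, 1) (pd (0, 1) F)) := pd_contDiff c2 _
  have c122 : ContDiff ℝ ∞ (pd (1, 0) (pd (0, 1) (pd (0, 1) F))) := pd_contDiff c22 _
  have c211 : ContDiff ℝ ∞ (pd (0, 1) (pd (1, 0) (pd (1, 0) F))) := pd_contDiff c11 _
  -- the operators in terms of pd
  have hM : ∀ q : ℝ × ℝ, opM κ F q =
      κ / 2 * pd (0, 1) (pd (0, 1) F) q + (κ - 6) / (q.2 - q.1) * pd (0, 1) F q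
        + 2 / (q.1 - q.2) * pd (1, 0) F q := by
    intro q
    simp only [opM]
    rw [py_eq hF0, px_eq hF0, py_eq c2]
  have hL : ∀ q : ℝ × ℝ, opL κ F q =
      κ / 2 * pd (1, 0) (pd (1, 0) F) q + (κ - 6) / (q.1 - q.2) * pd (1, 0) F q
        + 2 / (q.2 - q.1) * pd (0, 1) F q := by
    intro q
    simp only [opL]
    rw [px_eq hF0, py_eq hF0, px_eq c1]
  -- first x-derivative of opM F
  have hpxM : ∀ a b : ℝ, a ≠ b → px (opM κ F) (a, b) =
      κ / 2 * pd (1, 0) (pd (0, 1) (pd (0, 1) F)) (a, b)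
        + (κ - 6) / (b - a) ^ 2 * pd (0, 1) F (a, b)
        + (κ - 6) / (b - a) * pd (1, 0) (pd (0, 1) F) (a, b)
        + (-2) / (a - b) ^ 2 * pd (1, 0) F (a, b)
        + 2 / (a - b) * pd (1, 0) (pd (1, 0) F) (a, b) := by
    intro a b hab
    have hfun : (fun u => opM κ F (u, b)) = fun u =>
        κ / 2 * pd (0, 1) (pd (0, 1) F) (u, b) + (κ - 6) / (b - u) * pd (0, 1) F (u, b)
          + 2 / (u - b) * pd (1, 0) F (u, b) := funext fun u => hM (u, b)
    have t1 := (hasDerivAt_slice1 c22 a b).const_mul (κ / 2)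
    have t2 := (hda_B (κ - 6) hab).fun_mul (hasDerivAt_slice1 c2 a b)
    have t3 := (hda_A 2 hab).fun_mul (hasDerivAt_slice1 c1 a b)
    have h0 : px (opM κ F) (a, b) = deriv (fun u => opM κ F (u, b)) a := rfl
    rw [h0, hfun, ((t1.fun_add t2).fun_add t3).deriv]
    ring
  -- first y-derivative of opM F at (x, y)
  have hpyM : py (opM κ F) (x, y) =
      κ / 2 * pd (0, 1) (pd (0, 1) (pd (0, 1) F)) (x, y)
        + (-(κ - 6)) / (y - x) ^ 2 * pd (0, 1) F (x, y)
        + (κ - 6) / (y - x) * pd (0, 1) (pd (0, 1) F) (x, y)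
        + 2 / (x - y) ^ 2 * pd (1, 0) F (x, y)
        + 2 / (x - y) * pd (0, 1) (pd (1, 0) F) (x, y) := by
    have hfun : (fun v => opM κ F (x, v)) = fun v =>
        κ / 2 * pd (0, 1) (pd (0, 1) F) (x, v) + (κ - 6) / (v - x) * pd (0, 1) F (x, v)
          + 2 / (x - v) * pd (1, 0) F (x, v) := funext fun v => hM (x, v)
    have t1 := (hasDerivAt_slice2 c22 x y).const_mul (κ / 2)
    have t2 := (hda_A (κ - 6) hyx).fun_mul (hasDerivAt_slice2 c2 x y)
    have t3 := (hda_B 2 hyx).fun_mul (hasDerivAt_slice2 c1 x y)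
    have h0 : py (opM κ F) (x, y) = deriv (fun v => opM κ F (x, v)) y := rfl
    rw [h0, hfun, ((t1.fun_add t2).fun_add t3).deriv]
    ring
  -- second x-derivative of opM F at (x, y)
  have hpxxM : px (px (opM κ F)) (x, y) =
      κ / 2 * pd (1, 0) (pd (1, 0) (pd (0, 1) (pd (0, 1) F))) (x, y)
        + 2 * (κ - 6) / (y - x) ^ 3 * pd (0, 1) F (x, y)
        + 2 * (κ - 6) / (y - x) ^ 2 * pd (1, 0) (pd (0, 1) F) (x, y)
        + (κ - 6) / (y - x) * pd (1, 0) (pd (1, 0) (pd (0, 1) F)) (x, y)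
        + 4 / (x - y) ^ 3 * pd (1, 0) F (x, y)
        + (-4) / (x - y) ^ 2 * pd (1, 0) (pd (1, 0) F) (x, y)
        + 2 / (x - y) * pd (1, 0) (pd (1, 0) (pd (1, 0) F)) (x, y) := by
    have hev : (fun u => px (opM κ F) (u, y)) =ᶠ[nhds x] fun u =>
        κ / 2 * pd (1, 0) (pd (0, 1) (pd (0, 1) F)) (u, y)
          + (κ - 6) / (y - u) ^ 2 * pd (0, 1) F (u, y)
          + (κ - 6) / (y - u) * pd (1, 0) (pd (0, 1) F) (u, y)
          + (-2) / (u - y) ^ 2 * pd (1, 0) F (u, y)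
          + 2 / (u - y) * pd (1, 0) (pd (1, 0) F) (u, y) := by
      filter_upwards [eventually_ne_nhds hxy] with u hu
      exact hpxM u y hu
    have t1 := (hasDerivAt_slice1 c122 x y).const_mul (κ / 2)
    have t2 := (hda_B2 (κ - 6) hxy).fun_mul (hasDerivAt_slice1 c2 x y)
    have t3 := (hda_B (κ - 6) hxy).fun_mul (hasDerivAt_slice1 c12 x y)
    have t4 := (hda_A2 (-2) hxy).fun_mul (hasDerivAt_slice1 c1 x y)
    have t5 := (hda_A 2 hxy).fun_mul (hasDerivAt_slice1 c11 x y)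
    have h0 : px (px (opM κ F)) (x, y) = deriv (fun u => px (opM κ F) (u, y)) x := rfl
    rw [h0, hev.deriv_eq, ((((t1.fun_add t2).fun_add t3).fun_add t4).fun_add t5).deriv]
    ring
  -- first y-derivative of opL F
  have hpyL : ∀ a b : ℝ, a ≠ b → py (opL κ F) (a, b) =
      κ / 2 * pd (0, 1) (pd (1, 0) (pd (1, 0) F)) (a, b)
        + (κ - 6) / (a - b) ^ 2 * pd (1, 0) F (a, b)
        + (κ - 6) / (a - b) * pd (0, 1) (pd (1, 0) F) (a, b)
        + (-2) / (b - a) ^ 2 * pd (0, 1) F (a, b)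
        + 2 / (b - a) * pd (0, 1) (pd (0, 1) F) (a, b) := by
    intro a b hab
    have hfun : (fun v => opL κ F (a, v)) = fun v =>
        κ / 2 * pd (1, 0) (pd (1, 0) F) (a, v) + (κ - 6) / (a - v) * pd (1, 0) F (a, v)
          + 2 / (v - a) * pd (0, 1) F (a, v) := funext fun v => hL (a, v)
    have t1 := (hasDerivAt_slice2 c11 a b).const_mul (κ / 2)
    have t2 := (hda_B (κ - 6) (Ne.symm hab)).fun_mul (hasDerivAt_slice2 c1 a b)
    have t3 := (hda_A 2 (Ne.symm hab)).fun_mul (hasDerivAt_slice2 c2 a b)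
    have h0 : py (opL κ F) (a, b) = deriv (fun v => opL κ F (a, v)) b := rfl
    rw [h0, hfun, ((t1.fun_add t2).fun_add t3).deriv]
    ring
  -- first x-derivative of opL F at (x, y)
  have hpxL : px (opL κ F) (x, y) =
      κ / 2 * pd (1, 0) (pd (1, 0) (pd (1, 0) F)) (x, y)
        + (-(κ - 6)) / (x - y) ^ 2 * pd (1, 0) F (x, y)
        + (κ - 6) / (x - y) * pd (1, 0) (pd (1, 0) F) (x, y)
        + 2 / (y - x) ^ 2 * pd (0, 1) F (x, y)
        + 2 / (y - x) * pd (1, 0) (pd (0, 1) F) (x, y) := by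
    have hfun : (fun u => opL κ F (u, y)) = fun u =>
        κ / 2 * pd (1, 0) (pd (1, 0) F) (u, y) + (κ - 6) / (u - y) * pd (1, 0) F (u, y)
          + 2 / (y - u) * pd (0, 1) F (u, y) := funext fun u => hL (u, y)
    have t1 := (hasDerivAt_slice1 c11 x y).const_mul (κ / 2)
    have t2 := (hda_A (κ - 6) hxy).fun_mul (hasDerivAt_slice1 c1 x y)
    have t3 := (hda_B 2 hxy).fun_mul (hasDerivAt_slice1 c2 x y)
    have h0 : px (opL κ F) (x, y) = deriv (fun u => opL κ F (u, y)) x := rfl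
    rw [h0, hfun, ((t1.fun_add t2).fun_add t3).deriv]
    ring
  -- second y-derivative of opL F at (x, y)
  have hpyyL : py (py (opL κ F)) (x, y) =
      κ / 2 * pd (0, 1) (pd (0, 1) (pd (1, 0) (pd (1, 0) F))) (x, y)
        + 2 * (κ - 6) / (x - y) ^ 3 * pd (1, 0) F (x, y)
        + 2 * (κ - 6) / (x - y) ^ 2 * pd (0, 1) (pd (1, 0) F) (x, y)
        + (κ - 6) / (x - y) * pd (0, 1) (pd (0, 1) (pd (1, 0) F)) (x, y)
        + 4 / (y - x) ^ 3 * pd (0, 1) F (x, y)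
        + (-4) / (y - x) ^ 2 * pd (0, 1) (pd (0, 1) F) (x, y)
        + 2 / (y - x) * pd (0, 1) (pd (0, 1) (pd (0, 1) F)) (x, y) := by
    have c221 : ContDiff ℝ ∞ (pd (0, 1) (pd (1, 0) F)) := c21
    have hev : (fun v => py (opL κ F) (x, v)) =ᶠ[nhds y] fun v =>
        κ / 2 * pd (0, 1) (pd (1, 0) (pd (1, 0) F)) (x, v)
          + (κ - 6) / (x - v) ^ 2 * pd (1, 0) F (x, v)
          + (κ - 6) / (x - v) * pd (0, 1) (pd (1, 0) F) (x, v)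
          + (-2) / (v - x) ^ 2 * pd (0, 1) F (x, v)
          + 2 / (v - x) * pd (0, 1) (pd (0, 1) F) (x, v) := by
      filter_upwards [eventually_ne_nhds hyx] with v hv
      exact hpyL x v (Ne.symm hv)
    have t1 := (hasDerivAt_slice2 c211 x y).const_mul (κ / 2)
    have t2 := (hda_B2 (κ - 6) hyx).fun_mul (hasDerivAt_slice2 c1 x y)
    have t3 := (hda_B (κ - 6) hyx).fun_mul (hasDerivAt_slice2 c21 x y)
    have t4 := (hda_A2 (-2) hyx).fun_mul (hasDerivAt_slice2 c2 x y)
    have t5 := (hda_A 2 hyx).fun_mul (hasDerivAt_slice2 c22 x y)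
    have h0 : py (py (opL κ F)) (x, y) = deriv (fun v => py (opL κ F) (x, v)) y := rfl
    rw [h0, hev.deriv_eq, ((((t1.fun_add t2).fun_add t3).fun_add t4).fun_add t5).deriv]
    ring
  -- assemble
  have eL : opL κ (opM κ F) (x, y) =
      κ / 2 * px (px (opM κ F)) (x, y) + (κ - 6) / (x - y) * px (opM κ F) (x, y)
        + 2 / (y - x) * py (opM κ F) (x, y) := rfl
  have eM : opM κ (opL κ F) (x, y) =
      κ / 2 * py (py (opL κ F)) (x, y) + (κ - 6) / (y - x) * py (opL κ F) (x, y)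
        + 2 / (x - y) * px (opL κ F) (x, y) := rfl
  -- commutation rewrites
  have commF : pd (0, 1) (pd (1, 0) F) = pd (1, 0) (pd (0, 1) F) := pd_comm' hF0
  have comm1 : pd (0, 1) (pd (1, 0) (pd (1, 0) F)) = pd (1, 0) (pd (0, 1) (pd (1, 0) F)) :=
    pd_comm' c1
  have comm2 : pd (0, 1) (pd (1, 0) (pd (0, 1) F)) = pd (1, 0) (pd (0, 1) (pd (0, 1) F)) :=
    pd_comm' c2
  have comm12 : pd (0, 1) (pd (1, 0) (pd (1, 0) (pd (0, 1) F)))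
      = pd (1, 0) (pd (0, 1) (pd (1, 0) (pd (0, 1) F))) := pd_comm' c12
  have hsub : (x, y).1 = x := rfl
  rw [eL, eM, hpxxM, hpxM x y hxy, hpyM, hpyyL, hpyL x y hxy, hpxL, hM (x, y), hL (x, y)]
  simp only [comm1, commF, comm12, comm2]
  have hyxe : y - x = -(x - y) := by ring
  have e2 : (-(x - y)) ^ 2 = (x - y) ^ 2 := by ring
  have e3 : (-(x - y)) ^ 3 = -((x - y) ^ 3) := by ring
  have e5 : ∀ c : ℝ, c / (x - y) ^ 3 = c / (x - y) ^ 2 * (1 / (x - y)) := by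
    intro c
    rw [pow_succ, ← div_div, div_eq_mul_inv (c / (x - y) ^ 2), one_div]
  rw [hyxe]
  simp only [e2, e3, div_neg, neg_div, neg_neg, e5]
  ring
end

section
/- Let κ, κ̃ > 0 and b = κ ∂_x ψ / ψ for a non-vanishing smooth function ψ. Then the condition '(2∂_x b)/(y−x) + Σ_i (2∂_i b)/(y−z_i) − b̃ ∂_y b + 2b/(y−x)² + (2κ−12)/(x−y)³ − (κ̃/2)∂_{yy}b = 0' with b̃ = κ̃ ∂_y ψ / ψ is equivalent to −κ ∂_x [ ((κ̃/2)∂_{yy}ψ + Σ_i 2∂_iψ/(z_i−y) + 2∂_xψ/(x−y) + (1 − 6/κ)ψ/(x−y)²) / ψ ] = 0. -/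
open scoped BigOperators

/-- Configurations `(x, y, z₁, …, z_n)`. -/
abbrev Config (n : ℕ) := ℝ × ℝ × (Fin n → ℝ)

/-- The set of configurations with pairwise distinct points. -/
def distinctConfig (n : ℕ) : Set (Config n) :=
  {p | p.1 ≠ p.2.1 ∧ (∀ i, p.2.2 i ≠ p.1) ∧ (∀ i, p.2.2 i ≠ p.2.1) ∧
    ∀ i j, i ≠ j → p.2.2 i ≠ p.2.2 j}

/-- `∂ₓ`. -/
noncomputable def Dx (n : ℕ) (F : Config n → ℝ) : Config n → ℝ :=
  fun p => deriv (fun u => F (u, p.2.1, p.2.2)) p.1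

/-- `∂_y`. -/
noncomputable def Dy (n : ℕ) (F : Config n → ℝ) : Config n → ℝ :=
  fun p => deriv (fun u => F (p.1, u, p.2.2)) p.2.1

/-- `∂_{z_i}`. -/
noncomputable def Dz (n : ℕ) (i : Fin n) (F : Config n → ℝ) : Config n → ℝ :=
  fun p => deriv (fun u => F (p.1, p.2.1, Function.update p.2.2 i u)) (p.2.2 i)

namespace CommAux

variable {n : ℕ}

noncomputable def PD (d : Config n) (G : Config n → ℝ) : Config n → ℝ :=
  fun q => fderiv ℝ G q d

def eX (n : ℕ) : Config n := (1, 0, 0)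
def eY (n : ℕ) : Config n := (0, 1, 0)
def eZ (i : Fin n) : Config n := (0, 0, Pi.single i 1)

lemma isOpen_distinctConfig (n : ℕ) : IsOpen (distinctConfig n) := by
  have h1 : IsOpen {p : Config n | p.1 ≠ p.2.1} :=
    isOpen_ne_fun continuous_fst (continuous_fst.comp continuous_snd)
  have h2 : IsOpen {p : Config n | ∀ i, p.2.2 i ≠ p.1} := by
    have : {p : Config n | ∀ i, p.2.2 i ≠ p.1} = ⋂ i, {p : Config n | p.2.2 i ≠ p.1} := by
      ext p; simp
    rw [this]
    exact isOpen_iInter_of_finite fun i =>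
      isOpen_ne_fun ((continuous_apply i).comp (continuous_snd.comp continuous_snd)) continuous_fst
  have h3 : IsOpen {p : Config n | ∀ i, p.2.2 i ≠ p.2.1} := by
    have : {p : Config n | ∀ i, p.2.2 i ≠ p.2.1} = ⋂ i, {p : Config n | p.2.2 i ≠ p.2.1} := by
      ext p; simp
    rw [this]
    exact isOpen_iInter_of_finite fun i =>
      isOpen_ne_fun ((continuous_apply i).comp (continuous_snd.comp continuous_snd))
        (continuous_fst.comp continuous_snd)
  have h4 : IsOpen {p : Config n | ∀ i j, i ≠ j → p.2.2 i ≠ p.2.2 j} := by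
    have : {p : Config n | ∀ i j, i ≠ j → p.2.2 i ≠ p.2.2 j} =
        ⋂ i, ⋂ j, {p : Config n | i ≠ j → p.2.2 i ≠ p.2.2 j} := by
      ext p; simp
    rw [this]
    refine isOpen_iInter_of_finite fun i => isOpen_iInter_of_finite fun j => ?_
    rcases eq_or_ne i j with rfl | hij
    · simp
    · have : {p : Config n | i ≠ j → p.2.2 i ≠ p.2.2 j} = {p : Config n | p.2.2 i ≠ p.2.2 j} := by
        ext p; simp [hij]
      rw [this]
      exact isOpen_ne_fun ((continuous_apply i).comp (continuous_snd.comp continuous_snd))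
        ((continuous_apply j).comp (continuous_snd.comp continuous_snd))
  exact h1.inter (h2.inter (h3.inter h4))

lemma hasDerivAt_update (d : Fin n → ℝ) (i : Fin n) (u : ℝ) :
    HasDerivAt (fun v => Function.update d i v) (Pi.single i 1) u := by
  rw [hasDerivAt_pi]
  intro j
  rcases eq_or_ne j i with rfl | hj
  · simp only [Function.update_self, Pi.single_eq_same]; exact hasDerivAt_id' u
  · simpa [Function.update_apply, hj, Pi.single_apply] using hasDerivAt_const u (d j)

lemma hasDerivAt_lineX {G : Config n → ℝ} {a c : ℝ} {d : Fin n → ℝ}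
    (h : DifferentiableAt ℝ G (a, c, d)) :
    HasDerivAt (fun u => G (u, c, d)) (PD (eX n) G (a, c, d)) a :=
  h.hasFDerivAt.comp_hasDerivAt a
    (HasDerivAt.prodMk (hasDerivAt_id a) (HasDerivAt.prodMk (hasDerivAt_const a c) (hasDerivAt_const a d)))

lemma hasDerivAt_lineY {G : Config n → ℝ} {a c : ℝ} {d : Fin n → ℝ}
    (h : DifferentiableAt ℝ G (a, c, d)) :
    HasDerivAt (fun u => G (a, u, d)) (PD (eY n) G (a, c, d)) c :=
  h.hasFDerivAt.comp_hasDerivAt c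
    (HasDerivAt.prodMk (hasDerivAt_const c a) (HasDerivAt.prodMk (hasDerivAt_id c) (hasDerivAt_const c d)))

lemma hasDerivAt_lineZ {G : Config n → ℝ} {a c : ℝ} {d : Fin n → ℝ} (i : Fin n)
    (h : DifferentiableAt ℝ G (a, c, d)) :
    HasDerivAt (fun u => G (a, c, Function.update d i u)) (PD (eZ i) G (a, c, d)) (d i) := by
  have h' : HasFDerivAt G (fderiv ℝ G (a, c, d)) (a, c, Function.update d i (d i)) := by
    rw [Function.update_eq_self]; exact h.hasFDerivAt
  exact h'.comp_hasDerivAt (d i)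
    (HasDerivAt.prodMk (hasDerivAt_const (d i) a) (HasDerivAt.prodMk (hasDerivAt_const (d i) c) (hasDerivAt_update d i (d i))))

lemma diffAt_of_smooth {F : Type*} [NormedAddCommGroup F] [NormedSpace ℝ F]
    {G : Config n → F} (h : ContDiffOn ℝ (⊤ : ℕ∞) G (distinctConfig n))
    {q : Config n} (hq : q ∈ distinctConfig n) : DifferentiableAt ℝ G q :=
  (h.differentiableOn (by simp)).differentiableAt
    ((isOpen_distinctConfig n).mem_nhds hq)

lemma PD_smooth {G : Config n → ℝ} (h : ContDiffOn ℝ (⊤ : ℕ∞) G (distinctConfig n))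
    (d : Config n) : ContDiffOn ℝ (⊤ : ℕ∞) (PD d G) (distinctConfig n) := by
  have h1 : ContDiffOn ℝ (⊤ : ℕ∞) (fderiv ℝ G) (distinctConfig n) :=
    h.fderiv_of_isOpen (isOpen_distinctConfig n) (by exact_mod_cast le_top)
  exact h1.clm_apply contDiffOn_const

lemma lineX_mem {p : Config n} (hp : p ∈ distinctConfig n) :
    ∀ᶠ u in nhds p.1, ((u, p.2.1, p.2.2) : Config n) ∈ distinctConfig n := by
  have hc : Continuous (fun u : ℝ => ((u, p.2.1, p.2.2) : Config n)) := by fun_prop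
  exact hc.continuousAt.preimage_mem_nhds ((isOpen_distinctConfig n).mem_nhds hp)

lemma lineY_mem {p : Config n} (hp : p ∈ distinctConfig n) :
    ∀ᶠ u in nhds p.2.1, ((p.1, u, p.2.2) : Config n) ∈ distinctConfig n := by
  have hc : Continuous (fun u : ℝ => ((p.1, u, p.2.2) : Config n)) := by fun_prop
  exact hc.continuousAt.preimage_mem_nhds ((isOpen_distinctConfig n).mem_nhds hp)

lemma lineZ_mem {p : Config n} (i : Fin n) (hp : p ∈ distinctConfig n) :
    ∀ᶠ u in nhds (p.2.2 i),
      ((p.1, p.2.1, Function.update p.2.2 i u) : Config n) ∈ distinctConfig n := by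
  have hc : Continuous (fun u : ℝ => ((p.1, p.2.1, Function.update p.2.2 i u) : Config n)) := by
    exact continuous_const.prodMk (continuous_const.prodMk
      (continuous_const.update i continuous_id))
  have h0 : ((p.1, p.2.1, Function.update p.2.2 i (p.2.2 i)) : Config n) ∈ distinctConfig n := by
    rw [Function.update_eq_self]; exact hp
  exact hc.continuousAt.preimage_mem_nhds ((isOpen_distinctConfig n).mem_nhds h0)

lemma Dx_congrU {F G : Config n → ℝ} (h : ∀ q ∈ distinctConfig n, F q = G q)
    {p : Config n} (hp : p ∈ distinctConfig n) : Dx n F p = Dx n G p := by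
  apply Filter.EventuallyEq.deriv_eq
  filter_upwards [lineX_mem hp] with u hu using h _ hu

lemma Dy_congrU {F G : Config n → ℝ} (h : ∀ q ∈ distinctConfig n, F q = G q)
    {p : Config n} (hp : p ∈ distinctConfig n) : Dy n F p = Dy n G p := by
  apply Filter.EventuallyEq.deriv_eq
  filter_upwards [lineY_mem hp] with u hu using h _ hu

lemma Dz_congrU {F G : Config n → ℝ} (i : Fin n) (h : ∀ q ∈ distinctConfig n, F q = G q)
    {p : Config n} (hp : p ∈ distinctConfig n) : Dz n i F p = Dz n i G p := by
  apply Filter.EventuallyEq.deriv_eq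
  filter_upwards [lineZ_mem i hp] with u hu using h _ hu

lemma PD_congrU (d : Config n) {F G : Config n → ℝ} (h : ∀ q ∈ distinctConfig n, F q = G q)
    {p : Config n} (hp : p ∈ distinctConfig n) : PD d F p = PD d G p := by
  have hev : F =ᶠ[nhds p] G := by
    filter_upwards [(isOpen_distinctConfig n).mem_nhds hp] with q hq using h q hq
  simp only [PD, hev.fderiv_eq]

lemma PD_swap {G : Config n → ℝ} (h : ContDiffOn ℝ (⊤ : ℕ∞) G (distinctConfig n))
    (d e : Config n) {q : Config n} (hq : q ∈ distinctConfig n) :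
    PD d (PD e G) q = PD e (PD d G) q := by
  have hsm2 : ContDiffOn ℝ (⊤ : ℕ∞) (fderiv ℝ G) (distinctConfig n) :=
    h.fderiv_of_isOpen (isOpen_distinctConfig n) (by exact_mod_cast le_top)
  have hfd : DifferentiableAt ℝ (fderiv ℝ G) q := diffAt_of_smooth hsm2 hq
  have key : ∀ v w : Config n, fderiv ℝ (fderiv ℝ G) q v w = fderiv ℝ (fderiv ℝ G) q w v := by
    intro v w
    apply second_derivative_symmetric_of_eventually (f := G) (f' := fderiv ℝ G)
    · filter_upwards [(isOpen_distinctConfig n).mem_nhds hq] with y hy using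
        (diffAt_of_smooth h hy).hasFDerivAt
    · exact hfd.hasFDerivAt
  have expand : ∀ d' e' : Config n, PD d' (PD e' G) q = fderiv ℝ (fderiv ℝ G) q d' e' := by
    intro d' e'
    show fderiv ℝ (fun q' => fderiv ℝ G q' e') q d' = _
    rw [fderiv_clm_apply hfd (differentiableAt_const e')]
    simp
  rw [expand, expand, key]

end CommAux

open CommAux in
/-- With `b = κ ∂ₓψ/ψ` and `b̃ = κ̃ ∂_yψ/ψ` for a non-vanishing smooth `ψ`, the nonlinear
commutation condition on `b` is equivalent to the integrability condition
`−κ ∂ₓ[((κ̃/2)∂_yyψ + Σᵢ 2∂ᵢψ/(zᵢ−y) + 2∂ₓψ/(x−y) + (1−6/κ)ψ/(x−y)²)/ψ] = 0`. -/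
theorem commutation_condition_as_integrability (n : ℕ) (κ κt : ℝ) (hκ : 0 < κ) (hκt : 0 < κt)
    (ψ : Config n → ℝ) (hψ : ContDiffOn ℝ (⊤ : ℕ∞) ψ (distinctConfig n))
    (hne : ∀ p ∈ distinctConfig n, ψ p ≠ 0) :
    ∀ p ∈ distinctConfig n,
      ((fun b bt => fun q =>
          2 * Dx n b q / (q.2.1 - q.1) + (∑ i, 2 * Dz n i b q / (q.2.1 - q.2.2 i)) -
            bt q * Dy n b q + 2 * b q / (q.2.1 - q.1) ^ 2 +
            (2 * κ - 12) / (q.1 - q.2.1) ^ 3 - κt / 2 * Dy n (Dy n b) q)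
          (fun q => κ * Dx n ψ q / ψ q) (fun q => κt * Dy n ψ q / ψ q) p = 0
        ↔
      -κ * Dx n (fun q =>
          (κt / 2 * Dy n (Dy n ψ) q + (∑ i, 2 * Dz n i ψ q / (q.2.2 i - q.2.1)) +
            2 * Dx n ψ q / (q.1 - q.2.1) + (1 - 6 / κ) * ψ q / (q.1 - q.2.1) ^ 2) / ψ q) p
        = 0) := by
  intro p hp
  have hp' : p.1 ≠ p.2.1 ∧ (∀ i, p.2.2 i ≠ p.1) ∧ (∀ i, p.2.2 i ≠ p.2.1) ∧
      ∀ i j, i ≠ j → p.2.2 i ≠ p.2.2 j := hp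
  have hsm : ContDiffOn ℝ (⊤ : ℕ∞) ψ (distinctConfig n) := hψ.of_le (by simp)
  have hs0 : ψ p ≠ 0 := hne p hp
  have hyx : p.2.1 - p.1 ≠ 0 := sub_ne_zero.2 (Ne.symm hp'.1)
  have hxy : p.1 - p.2.1 ≠ 0 := sub_ne_zero.2 hp'.1
  have hzy : ∀ i, p.2.2 i - p.2.1 ≠ 0 := fun i => sub_ne_zero.2 (hp'.2.2.1 i)
  have hyz : ∀ i, p.2.1 - p.2.2 i ≠ 0 := fun i => sub_ne_zero.2 (hp'.2.2.1 i).symm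
  -- smoothness of partial derivatives
  have hX : ContDiffOn ℝ (⊤ : ℕ∞) (PD (eX n) ψ) (distinctConfig n) := PD_smooth hsm _
  have hY : ContDiffOn ℝ (⊤ : ℕ∞) (PD (eY n) ψ) (distinctConfig n) := PD_smooth hsm _
  have hXY : ContDiffOn ℝ (⊤ : ℕ∞) (PD (eY n) (PD (eX n) ψ)) (distinctConfig n) := PD_smooth hX _
  have hYY : ContDiffOn ℝ (⊤ : ℕ∞) (PD (eY n) (PD (eY n) ψ)) (distinctConfig n) := PD_smooth hY _
  -- identification of Dx/Dy/Dz with PD on U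
  have eDx : ∀ q ∈ distinctConfig n, Dx n ψ q = PD (eX n) ψ q := fun q hq =>
    (hasDerivAt_lineX (diffAt_of_smooth hsm hq)).deriv
  have eDy : ∀ q ∈ distinctConfig n, Dy n ψ q = PD (eY n) ψ q := fun q hq =>
    (hasDerivAt_lineY (diffAt_of_smooth hsm hq)).deriv
  have eDz : ∀ (i : Fin n), ∀ q ∈ distinctConfig n, Dz n i ψ q = PD (eZ i) ψ q := fun i q hq =>
    (hasDerivAt_lineZ i (diffAt_of_smooth hsm hq)).deriv
  have eDyy : ∀ q ∈ distinctConfig n, Dy n (Dy n ψ) q = PD (eY n) (PD (eY n) ψ) q := by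
    intro q hq
    rw [Dy_congrU eDy hq]
    exact (hasDerivAt_lineY (diffAt_of_smooth hY hq)).deriv
  have eb : ∀ q ∈ distinctConfig n,
      κ * Dx n ψ q / ψ q = κ * PD (eX n) ψ q / ψ q := fun q hq => by rw [eDx q hq]
  -- values of derivatives of b
  have hDxb : Dx n (fun q => κ * Dx n ψ q / ψ q) p =
      (κ * PD (eX n) (PD (eX n) ψ) p * ψ p - κ * PD (eX n) ψ p * PD (eX n) ψ p) / ψ p ^ 2 := by
    rw [Dx_congrU eb hp]
    exact (((hasDerivAt_lineX (diffAt_of_smooth hX hp)).const_mul κ).div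
      (hasDerivAt_lineX (diffAt_of_smooth hsm hp)) hs0).deriv
  have hDyb : ∀ q ∈ distinctConfig n, Dy n (fun q' => κ * Dx n ψ q' / ψ q') q =
      (κ * PD (eY n) (PD (eX n) ψ) q * ψ q - κ * PD (eX n) ψ q * PD (eY n) ψ q) / ψ q ^ 2 := by
    intro q hq
    rw [Dy_congrU eb hq]
    exact (((hasDerivAt_lineY (diffAt_of_smooth hX hq)).const_mul κ).div
      (hasDerivAt_lineY (diffAt_of_smooth hsm hq)) (hne q hq)).deriv
  have hDzb : ∀ i : Fin n, Dz n i (fun q => κ * Dx n ψ q / ψ q) p =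
      (κ * PD (eZ i) (PD (eX n) ψ) p * ψ p - κ * PD (eX n) ψ p * PD (eZ i) ψ p) / ψ p ^ 2 := by
    intro i
    rw [Dz_congrU i eb hp]
    have hz0i : ψ (p.1, p.2.1, Function.update p.2.2 i (p.2.2 i)) ≠ 0 := by
      rw [Function.update_eq_self]; exact hs0
    refine (((hasDerivAt_lineZ i (diffAt_of_smooth hX hp)).const_mul κ).div
      (hasDerivAt_lineZ i (diffAt_of_smooth hsm hp)) hz0i).deriv.trans ?_
    beta_reduce
    rw [Function.update_eq_self]
  have hDyyb : Dy n (Dy n (fun q => κ * Dx n ψ q / ψ q)) p =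
      ((κ * PD (eY n) (PD (eY n) (PD (eX n) ψ)) p * ψ p
          + κ * PD (eY n) (PD (eX n) ψ) p * PD (eY n) ψ p
        - (κ * PD (eY n) (PD (eX n) ψ) p * PD (eY n) ψ p
          + κ * PD (eX n) ψ p * PD (eY n) (PD (eY n) ψ) p)) * ψ p ^ 2
        - (κ * PD (eY n) (PD (eX n) ψ) p * ψ p - κ * PD (eX n) ψ p * PD (eY n) ψ p)
          * (((2 : ℕ) : ℝ) * ψ p ^ 1 * PD (eY n) ψ p)) / (ψ p ^ 2) ^ 2 := by
    rw [Dy_congrU hDyb hp]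
    exact (((((hasDerivAt_lineY (diffAt_of_smooth hXY hp)).const_mul κ).mul
        (hasDerivAt_lineY (diffAt_of_smooth hsm hp))).sub
        (((hasDerivAt_lineY (diffAt_of_smooth hX hp)).const_mul κ).mul
        (hasDerivAt_lineY (diffAt_of_smooth hY hp)))).div
        ((hasDerivAt_lineY (diffAt_of_smooth hsm hp)).pow 2) (pow_ne_zero 2 hs0)).deriv
  -- symmetry of mixed partials
  have sym1 : PD (eX n) (PD (eY n) (PD (eY n) ψ)) p
      = PD (eY n) (PD (eY n) (PD (eX n) ψ)) p := by
    have step1 : PD (eX n) (PD (eY n) (PD (eY n) ψ)) p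
        = PD (eY n) (PD (eX n) (PD (eY n) ψ)) p := PD_swap hY (eX n) (eY n) hp
    have step2 : PD (eY n) (PD (eX n) (PD (eY n) ψ)) p
        = PD (eY n) (PD (eY n) (PD (eX n) ψ)) p :=
      PD_congrU (eY n) (fun q hq => PD_swap hsm (eX n) (eY n) hq) hp
    exact step1.trans step2
  have sym2 : ∀ i : Fin n, PD (eX n) (PD (eZ i) ψ) p = PD (eZ i) (PD (eX n) ψ) p :=
    fun i => PD_swap hsm (eX n) (eZ i) hp
  -- the RHS function identified on U
  have eH : ∀ q ∈ distinctConfig n,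
      (κt / 2 * Dy n (Dy n ψ) q + (∑ i, 2 * Dz n i ψ q / (q.2.2 i - q.2.1)) +
        2 * Dx n ψ q / (q.1 - q.2.1) + (1 - 6 / κ) * ψ q / (q.1 - q.2.1) ^ 2) / ψ q
      = (κt / 2 * PD (eY n) (PD (eY n) ψ) q + (∑ i, 2 * PD (eZ i) ψ q / (q.2.2 i - q.2.1)) +
        2 * PD (eX n) ψ q / (q.1 - q.2.1) + (1 - 6 / κ) * ψ q / (q.1 - q.2.1) ^ 2) / ψ q := by
    intro q hq
    rw [eDyy q hq, eDx q hq,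
      show (∑ i, 2 * Dz n i ψ q / (q.2.2 i - q.2.1))
          = ∑ i, 2 * PD (eZ i) ψ q / (q.2.2 i - q.2.1) from
        Finset.sum_congr rfl fun i _ => by rw [eDz i q hq]]
  -- value of the RHS derivative
  have hRHS : Dx n (fun q =>
      (κt / 2 * Dy n (Dy n ψ) q + (∑ i, 2 * Dz n i ψ q / (q.2.2 i - q.2.1)) +
        2 * Dx n ψ q / (q.1 - q.2.1) + (1 - 6 / κ) * ψ q / (q.1 - q.2.1) ^ 2) / ψ q) p =
      ((κt / 2 * PD (eY n) (PD (eY n) (PD (eX n) ψ)) p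
          + (∑ i, 2 * PD (eZ i) (PD (eX n) ψ) p / (p.2.2 i - p.2.1))
          + (2 * PD (eX n) (PD (eX n) ψ) p * (p.1 - p.2.1) - 2 * PD (eX n) ψ p * 1)
              / (p.1 - p.2.1) ^ 2
          + ((1 - 6 / κ) * PD (eX n) ψ p * (p.1 - p.2.1) ^ 2
              - (1 - 6 / κ) * ψ p * (((2 : ℕ) : ℝ) * (p.1 - p.2.1) ^ 1 * 1))
              / ((p.1 - p.2.1) ^ 2) ^ 2) * ψ p
        - (κt / 2 * PD (eY n) (PD (eY n) ψ) p
            + (∑ i, 2 * PD (eZ i) ψ p / (p.2.2 i - p.2.1))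
            + 2 * PD (eX n) ψ p / (p.1 - p.2.1)
            + (1 - 6 / κ) * ψ p / (p.1 - p.2.1) ^ 2) * PD (eX n) ψ p) / ψ p ^ 2 := by
    rw [Dx_congrU eH hp]
    have d1 : HasDerivAt (fun u => κt / 2 * PD (eY n) (PD (eY n) ψ) (u, p.2.1, p.2.2))
        (κt / 2 * PD (eY n) (PD (eY n) (PD (eX n) ψ)) p) p.1 := by
      rw [← sym1]
      exact (hasDerivAt_lineX (diffAt_of_smooth hYY hp)).const_mul _
    have d2 : HasDerivAt (fun u => ∑ i, 2 * PD (eZ i) ψ (u, p.2.1, p.2.2) / (p.2.2 i - p.2.1))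
        (∑ i, 2 * PD (eZ i) (PD (eX n) ψ) p / (p.2.2 i - p.2.1)) p.1 := by
      refine HasDerivAt.fun_sum fun i _ => ?_
      rw [← sym2 i]
      exact ((hasDerivAt_lineX (diffAt_of_smooth (PD_smooth hsm (eZ i)) hp)).const_mul 2).div_const _
    have d3 : HasDerivAt (fun u => 2 * PD (eX n) ψ (u, p.2.1, p.2.2) / (u - p.2.1))
        ((2 * PD (eX n) (PD (eX n) ψ) p * (p.1 - p.2.1) - 2 * PD (eX n) ψ p * 1)
          / (p.1 - p.2.1) ^ 2) p.1 :=
      ((hasDerivAt_lineX (diffAt_of_smooth hX hp)).const_mul 2).div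
        ((hasDerivAt_id p.1).sub_const p.2.1) hxy
    have d4 : HasDerivAt (fun u => (1 - 6 / κ) * ψ (u, p.2.1, p.2.2) / (u - p.2.1) ^ 2)
        (((1 - 6 / κ) * PD (eX n) ψ p * (p.1 - p.2.1) ^ 2
          - (1 - 6 / κ) * ψ p * (((2 : ℕ) : ℝ) * (p.1 - p.2.1) ^ 1 * 1))
          / ((p.1 - p.2.1) ^ 2) ^ 2) p.1 :=
      ((hasDerivAt_lineX (diffAt_of_smooth hsm hp)).const_mul _).div
        (((hasDerivAt_id p.1).sub_const p.2.1).pow 2) (pow_ne_zero 2 hxy)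
    exact ((((d1.add d2).add d3).add d4).div
      (hasDerivAt_lineX (diffAt_of_smooth hsm hp)) hs0).deriv
  -- assemble
  beta_reduce
  rw [hDxb, hDyyb, hRHS, hDyb p hp, eDx p hp, eDy p hp]
  simp only [hDzb]
  rw [show (∑ i, 2 * ((κ * PD (eZ i) (PD (eX n) ψ) p * ψ p
        - κ * PD (eX n) ψ p * PD (eZ i) ψ p) / ψ p ^ 2) / (p.2.1 - p.2.2 i))
      = (-κ / ψ p) * (∑ i, 2 * PD (eZ i) (PD (eX n) ψ) p / (p.2.2 i - p.2.1))
        + (κ * PD (eX n) ψ p / ψ p ^ 2) * (∑ i, 2 * PD (eZ i) ψ p / (p.2.2 i - p.2.1)) from by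
    rw [Finset.mul_sum, Finset.mul_sum, ← Finset.sum_add_distrib]
    refine Finset.sum_congr rfl fun i _ => ?_
    field_simp [hs0, hyz i, hzy i]
    ring]
  refine iff_of_eq (congrArg (fun t : ℝ => t = 0) ?_)
  push_cast
  field_simp
  ring
end

section
/- Suppose h is a smooth function of (x, z_1, …, z_n) of the form h(x,z) = Σ_i μ_i(z)/(x−z_i)² + Σ_i ρ_i(z)/(x−z_i) that satisfies, as an identity of rational functions in x and y: Σ_{i,j} (1/((y−z_j)(x−z_i)²) − 1/((x−z_j)(y−z_i)²)) ∂_j μ_i + Σ_{i,j} (1/((y−z_j)(x−z_i)) − 1/((x−z_j)(y−z_i))) ∂_j ρ_i = 0. Then ∂_j μ_i = 0 for all i, j (so the μ_i are constant), and ∂_i ρ_j = ∂_j ρ_i for all i, j. -/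
open scoped BigOperators

/-- Partial derivative `∂_{z_j}` of a function of `z = (z₁,…,z_n)`. -/
noncomputable def Dp (n : ℕ) (j : Fin n) (G : (Fin n → ℝ) → ℝ) : (Fin n → ℝ) → ℝ :=
  fun z => deriv (fun u => G (Function.update z j u)) (z j)


lemma vanish_of_cont {f : ℝ → ℝ} (hf : Continuous f) {s : Set ℝ} (hs : s.Finite)
    (h0 : ∀ x ∉ s, f x = 0) (x : ℝ) : f x = 0 := by
  have hd : Dense sᶜ := (hs.countable).dense_compl ℝ
  have h := Continuous.ext_on hd hf continuous_const (fun y hy => h0 y hy)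
  exact congrFun h x

lemma key_constraints (n : ℕ) (z : Fin n → ℝ) (hz : ∀ i j, i ≠ j → z i ≠ z j)
    (a b : Fin n → Fin n → ℝ)
    (hid : ∀ x y : ℝ, x ≠ y → (∀ i, x ≠ z i) → (∀ i, y ≠ z i) →
      (∑ i, ∑ j,
        ((1 / ((y - z j) * (x - z i) ^ 2) - 1 / ((x - z j) * (y - z i) ^ 2)) * a i j +
          (1 / ((y - z j) * (x - z i)) - 1 / ((x - z j) * (y - z i))) * b i j)) = 0) :
    (∀ i j, a i j = 0) ∧ (∀ i j, b i j = b j i) := by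
  classical
  set Q : Fin n → ℝ → ℝ := fun i x => ∏ k ∈ Finset.univ.erase i, (x - z k) with hQdef
  set P : ℝ → ℝ := fun x => ∏ k, (x - z k) with hPdef
  have hPQ : ∀ (i : Fin n) (x : ℝ), P x = (x - z i) * Q i x := by
    intro i x
    simp only [hPdef, hQdef]
    exact (Finset.mul_prod_erase Finset.univ (fun k => x - z k) (Finset.mem_univ i)).symm
  have hQ0 : ∀ (i k : Fin n), i ≠ k → Q i (z k) = 0 := by
    intro i k hik
    simp only [hQdef]
    exact Finset.prod_eq_zero (Finset.mem_erase.mpr ⟨Ne.symm hik, Finset.mem_univ k⟩) (sub_self _)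
  have hQne : ∀ i : Fin n, Q i (z i) ≠ 0 := by
    intro i
    simp only [hQdef]
    exact Finset.prod_ne_zero_iff.mpr fun k hk =>
      sub_ne_zero.mpr (hz i k (Ne.symm (Finset.mem_erase.mp hk).1))
  have hPz : ∀ k : Fin n, P (z k) = 0 := by
    intro k; rw [hPQ k]; simp
  have hPne : ∀ x : ℝ, (∀ i, x ≠ z i) → P x ≠ 0 := by
    intro x hx
    simp only [hPdef]
    exact Finset.prod_ne_zero_iff.mpr fun k _ => sub_ne_zero.mpr (hx k)
  have hQc : ∀ i, Continuous (Q i) := by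
    intro i
    simp only [hQdef]
    exact continuous_finset_prod _ fun k _ => continuous_id.sub continuous_const
  have hPc : Continuous P := by
    simp only [hPdef]
    exact continuous_finset_prod _ fun k _ => continuous_id.sub continuous_const
  set G : ℝ → ℝ → ℝ := fun x y => ∑ i, ∑ j,
      ((Q j y * P y * Q i x ^ 2 - Q j x * P x * Q i y ^ 2) * a i j +
        (Q j y * P y * (Q i x * P x) - Q j x * P x * (Q i y * P y)) * b i j) with hGdef
  -- Claim A : G vanishes on the good set
  have claimA : ∀ x y : ℝ, x ≠ y → (∀ i, x ≠ z i) → (∀ i, y ≠ z i) → G x y = 0 := by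
    intro x y hxy hx hy
    have hS := hid x y hxy hx hy
    have : G x y = P x ^ 2 * P y ^ 2 * (∑ i, ∑ j,
        ((1 / ((y - z j) * (x - z i) ^ 2) - 1 / ((x - z j) * (y - z i) ^ 2)) * a i j +
          (1 / ((y - z j) * (x - z i)) - 1 / ((x - z j) * (y - z i))) * b i j)) := by
      simp only [hGdef]
      rw [Finset.mul_sum]
      refine Finset.sum_congr rfl fun i _ => ?_
      rw [Finset.mul_sum]
      refine Finset.sum_congr rfl fun j _ => ?_
      have hxi : x - z i ≠ 0 := sub_ne_zero.mpr (hx i)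
      have hxj : x - z j ≠ 0 := sub_ne_zero.mpr (hx j)
      have hyi : y - z i ≠ 0 := sub_ne_zero.mpr (hy i)
      have hyj : y - z j ≠ 0 := sub_ne_zero.mpr (hy j)
      have e1 : P x ^ 2 * P y ^ 2 * (1 / ((y - z j) * (x - z i) ^ 2))
          = Q j y * P y * Q i x ^ 2 := by
        rw [hPQ i x, hPQ j y]; field_simp
      have e2 : P x ^ 2 * P y ^ 2 * (1 / ((x - z j) * (y - z i) ^ 2))
          = Q j x * P x * Q i y ^ 2 := by
        rw [hPQ j x, hPQ i y]; field_simp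
      have e3 : P x ^ 2 * P y ^ 2 * (1 / ((y - z j) * (x - z i)))
          = Q j y * P y * (Q i x * P x) := by
        rw [hPQ i x, hPQ j y]; field_simp
      have e4 : P x ^ 2 * P y ^ 2 * (1 / ((x - z j) * (y - z i)))
          = Q j x * P x * (Q i y * P y) := by
        rw [hPQ j x, hPQ i y]; field_simp
      linear_combination a i j * e1.symm - a i j * e2.symm + b i j * e3.symm - b i j * e4.symm
    rw [this, hS, mul_zero]
  -- G vanishes everywhere once y avoids the poles
  have hG0 : ∀ y : ℝ, (∀ i, y ≠ z i) → ∀ x : ℝ, G x y = 0 := by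
    intro y hy
    have hc : Continuous fun x => G x y := by
      simp only [hGdef]
      refine continuous_finset_sum _ fun i _ => continuous_finset_sum _ fun j _ => ?_
      have h1 := hQc i; have h2 := hQc j; have h3 := hPc
      fun_prop
    refine vanish_of_cont hc ((Set.finite_range z).union (Set.finite_singleton y)) ?_
    intro x hx
    simp only [Set.mem_union, Set.mem_range, Set.mem_singleton_iff, not_or, not_exists] at hx
    exact claimA x y hx.2 (fun i => fun h => hx.1 i h.symm) hy
  -- evaluation of G at x = z k
  have hGeval : ∀ (k : Fin n) (y : ℝ), G (z k) y
      = ∑ j, Q j y * P y * Q k (z k) ^ 2 * a k j := by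
    intro k y
    calc G (z k) y = ∑ i, ∑ j, Q j y * P y * Q i (z k) ^ 2 * a i j := by
          simp only [hGdef]
          refine Finset.sum_congr rfl fun i _ => Finset.sum_congr rfl fun j _ => ?_
          rw [hPz k]; ring
      _ = ∑ j, Q j y * P y * Q k (z k) ^ 2 * a k j := by
          refine Finset.sum_eq_single_of_mem k (Finset.mem_univ k) fun i _ hik => ?_
          refine Finset.sum_eq_zero fun j _ => ?_
          rw [hQ0 i k hik]; ring
  -- μ-derivatives vanish
  have ha : ∀ k l, a k l = 0 := by
    intro k l
    have hF : ∀ y : ℝ, (∑ j, a k j * Q j y) = 0 := by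
      have hc : Continuous fun y => ∑ j, a k j * Q j y := by
        refine continuous_finset_sum _ fun j _ => ?_
        exact continuous_const.mul (hQc j)
      refine vanish_of_cont hc (Set.finite_range z) ?_
      intro y hy
      simp only [Set.mem_range, not_exists] at hy
      have hy' : ∀ i, y ≠ z i := fun i h => hy i h.symm
      have h1 : G (z k) y = 0 := hG0 y hy' (z k)
      rw [hGeval] at h1
      have h2 : P y * Q k (z k) ^ 2 * (∑ j, a k j * Q j y) = 0 := by
        rw [← h1, Finset.mul_sum]
        exact Finset.sum_congr rfl fun j _ => by ring
      have hmul : P y * Q k (z k) ^ 2 ≠ 0 := mul_ne_zero (hPne y hy') (pow_ne_zero 2 (hQne k))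
      exact (mul_eq_zero.mp h2).resolve_left hmul
    have h := hF (z l)
    have hsum' : (∑ j, a k j * Q j (z l)) = a k l * Q l (z l) := by
      refine Finset.sum_eq_single_of_mem l (Finset.mem_univ l) fun j _ hjl => ?_
      rw [hQ0 j l hjl]; ring
    rw [hsum'] at h
    exact (mul_eq_zero.mp h).resolve_right (hQne l)
  -- ρ cross-derivatives
  refine ⟨ha, ?_⟩
  set H : ℝ → ℝ → ℝ := fun x y => ∑ i, ∑ j, (Q j y * Q i x - Q j x * Q i y) * b i j with hHdef
  have hHc1 : ∀ y, Continuous fun x => H x y := by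
    intro y
    simp only [hHdef]
    refine continuous_finset_sum _ fun i _ => continuous_finset_sum _ fun j _ => ?_
    have h1 := hQc i; have h2 := hQc j
    fun_prop
  have hHc2 : ∀ x, Continuous fun y => H x y := by
    intro x
    simp only [hHdef]
    refine continuous_finset_sum _ fun i _ => continuous_finset_sum _ fun j _ => ?_
    have h1 := hQc i; have h2 := hQc j
    fun_prop
  have hH0 : ∀ x y : ℝ, (∀ i, x ≠ z i) → (∀ i, y ≠ z i) → H x y = 0 := by
    intro x y hx hy
    have h1 : G x y = 0 := hG0 y hy x
    have h2 : G x y = P x * P y * H x y := by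
      simp only [hGdef, hHdef, ha]
      rw [Finset.mul_sum]
      refine Finset.sum_congr rfl fun i _ => ?_
      rw [Finset.mul_sum]
      exact Finset.sum_congr rfl fun j _ => by ring
    rw [h2] at h1
    rcases mul_eq_zero.mp h1 with h | h
    · exact absurd h (mul_ne_zero (hPne x hx) (hPne y hy))
    · exact h
  have hH0' : ∀ (x : ℝ) (y : ℝ), (∀ i, y ≠ z i) → H x y = 0 := by
    intro x y hy
    refine vanish_of_cont (hHc1 y) (Set.finite_range z) ?_ x
    intro x' hx'
    simp only [Set.mem_range, not_exists] at hx'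
    exact hH0 x' y (fun i h => hx' i h.symm) hy
  have hH0'' : ∀ (x y : ℝ), H x y = 0 := by
    intro x y
    refine vanish_of_cont (hHc2 x) (Set.finite_range z) ?_ y
    intro y' hy'
    simp only [Set.mem_range, not_exists] at hy'
    exact hH0' x y' (fun i h => hy' i h.symm)
  have hsum : ∀ (k l : Fin n) (c : Fin n → Fin n → ℝ),
      (∑ i, ∑ j, Q j (z l) * Q i (z k) * c i j) = Q l (z l) * Q k (z k) * c k l := by
    intro k l c
    calc (∑ i, ∑ j, Q j (z l) * Q i (z k) * c i j)
        = ∑ j, Q j (z l) * Q k (z k) * c k j := by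
          refine Finset.sum_eq_single_of_mem k (Finset.mem_univ k) fun i _ hik => ?_
          refine Finset.sum_eq_zero fun j _ => ?_
          rw [hQ0 i k hik]; ring
      _ = Q l (z l) * Q k (z k) * c k l := by
          refine Finset.sum_eq_single_of_mem l (Finset.mem_univ l) fun j _ hjl => ?_
          rw [hQ0 j l hjl]; ring
  intro k l
  have h := hH0'' (z k) (z l)
  simp only [hHdef] at h
  have hsplit : (∑ i, ∑ j, (Q j (z l) * Q i (z k) - Q j (z k) * Q i (z l)) * b i j)
      = (∑ i, ∑ j, Q j (z l) * Q i (z k) * b i j)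
        - ∑ i, ∑ j, Q j (z k) * Q i (z l) * b i j := by
    rw [← Finset.sum_sub_distrib]
    refine Finset.sum_congr rfl fun i _ => ?_
    rw [← Finset.sum_sub_distrib]
    exact Finset.sum_congr rfl fun j _ => by ring
  rw [hsplit, hsum k l b, hsum l k b] at h
  have hne := mul_ne_zero (hQne l) (hQne k)
  have : Q l (z l) * Q k (z k) * (b k l - b l k) = 0 := by linarith [h]
  rcases mul_eq_zero.mp this with hcase | hcase
  · exact absurd hcase hne
  · linarith [hcase]

/-- If the coefficients `μᵢ(z)`, `ρᵢ(z)` of a weight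
`h(x,z) = Σᵢ μᵢ(z)/(x−zᵢ)² + Σᵢ ρᵢ(z)/(x−zᵢ)` satisfy the reduced
commutation/integrability identity as a rational identity in `x, y`, then the `μᵢ` are
constant and the `ρᵢ` satisfy the cross-derivative (potential) condition. -/
theorem weight_coefficients_constraints (n : ℕ)
    (μ ρ : Fin n → (Fin n → ℝ) → ℝ)
    (hμ : ∀ i, ContDiff ℝ (⊤ : ℕ∞) (μ i)) (hρ : ∀ i, ContDiff ℝ (⊤ : ℕ∞) (ρ i))
    (z : Fin n → ℝ) (hz : ∀ i j, i ≠ j → z i ≠ z j)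
    (hid : ∀ x y : ℝ, x ≠ y → (∀ i, x ≠ z i) → (∀ i, y ≠ z i) →
      (∑ i, ∑ j,
        ((1 / ((y - z j) * (x - z i) ^ 2) - 1 / ((x - z j) * (y - z i) ^ 2)) *
            Dp n j (μ i) z +
          (1 / ((y - z j) * (x - z i)) - 1 / ((x - z j) * (y - z i))) *
            Dp n j (ρ i) z)) = 0) :
    (∀ i j, Dp n j (μ i) z = 0) ∧ (∀ i j, Dp n i (ρ j) z = Dp n j (ρ i) z) := by
  obtain ⟨h1, h2⟩ := key_constraints n z hz (fun i j => Dp n j (μ i) z)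
    (fun i j => Dp n j (ρ i) z) hid
  exact ⟨h1, fun i j => h2 j i⟩
end
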